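/- arXiv:2603.10981 — 3 statements merged into one kernel-verified Lean document; each statement's English description precedes it below -/
import Mathlib

section
/- For any t ∈ {1,...,n} and composition μ of t into q parts with λ - μ ≥ 0 entrywise, the composition of deletion operators E^q_μ = (χ_{q-1})^{μ_{q-1}} ∘ ⋯ ∘ (χ_0)^{μ_0} acts on a Dicke state as E^q_μ |D^n_λ⟩ = √( (n-t choose λ - μ) / (n choose λ) ) |D^{n-t}_{λ - μ}⟩; the result is zero if λ - μ has a negative entry. -/
/-!
In the list model, `χ_k` prepends the letter `k`, so `E^q_μ ψ y = ψ (w ++ y)` for the fixed word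
`w = 0^{μ_0} ⋯ (q-1)^{μ_{q-1}}` of length `t` and content `μ`. A word `w ++ y` has length `n` and
content `λ` exactly when `y` has length `n - t` and content `λ - μ`, so `E^q_μ |D^n_λ⟩` is supported
where `|D^{n-t}_{λ-μ}⟩` is, and the two constant amplitudes differ by the stated factor. If some
`μ_k > λ_k`, no `w ++ y` has content `λ`.
-/

open Finset

/-- Dicke state `|D^n_λ⟩` in the list model (zero vector if `∑ λ ≠ n`,
implementing the convention that ill-formed Dicke states vanish). -/
noncomputable def dicke (q n : ℕ) (lam : Fin q → ℕ) : List (Fin q) → ℂ :=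
  fun x => if x.length = n ∧ ∀ i, x.count i = lam i
    then ((Real.sqrt (Nat.multinomial Finset.univ lam) : ℝ) : ℂ)⁻¹ else 0

/-- A `k`-type deletion operator `χ_k` (acting on the first position; the
position is irrelevant on permutation-invariant states). -/
def chi (q : ℕ) (k : Fin q) (ψ : List (Fin q) → ℂ) : List (Fin q) → ℂ :=
  fun y => ψ (k :: y)

/-- The deletion error `E^q_μ = (χ_{q-1})^{μ_{q-1}} ∘ ⋯ ∘ (χ_0)^{μ_0}`. -/
def Edel (q : ℕ) (mu : Fin q → ℕ) : (List (Fin q) → ℂ) → List (Fin q) → ℂ :=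
  (List.finRange q).foldl (fun F k => (chi q k)^[mu k] ∘ F) id

def deletedWord (q : ℕ) (mu : Fin q → ℕ) : List (Fin q) :=
  (List.finRange q).flatMap fun k => List.replicate (mu k) k

lemma count_deletedWord (q : ℕ) (mu : Fin q → ℕ) (i : Fin q) :
    (deletedWord q mu).count i = mu i := by
  rw [deletedWord, List.count_flatMap, ← Fin.sum_univ_def]
  simp only [Function.comp_apply, List.count_replicate, beq_iff_eq]
  rw [sum_ite_eq']
  simp

lemma length_deletedWord (q : ℕ) (mu : Fin q → ℕ) :
    (deletedWord q mu).length = ∑ i, mu i := by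
  rw [deletedWord, List.length_flatMap, ← Fin.sum_univ_def]
  simp

lemma chi_iterate_apply (q : ℕ) (k : Fin q) (m : ℕ) (ψ : List (Fin q) → ℂ) (y : List (Fin q)) :
    (chi q k)^[m] ψ y = ψ (List.replicate m k ++ y) := by
  induction m generalizing ψ with
  | zero => rfl
  | succ m ih => rw [Function.iterate_succ_apply, ih]; rfl

lemma foldl_chi_iterate_apply (q : ℕ) (mu : Fin q → ℕ) (l : List (Fin q))
    (F : (List (Fin q) → ℂ) → List (Fin q) → ℂ) (ψ : List (Fin q) → ℂ) (y : List (Fin q)) :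
    l.foldl (fun F k => (chi q k)^[mu k] ∘ F) F ψ y
      = F ψ (l.flatMap (fun k => List.replicate (mu k) k) ++ y) := by
  induction l generalizing F y with
  | nil => rfl
  | cons k l ih => simp [ih, chi_iterate_apply]

lemma Edel_apply (q : ℕ) (mu : Fin q → ℕ) (ψ : List (Fin q) → ℂ) (y : List (Fin q)) :
    Edel q mu ψ y = ψ (deletedWord q mu ++ y) :=
  foldl_chi_iterate_apply q mu _ id ψ y

section DickeAppend

variable {q n : ℕ} {lam : Fin q → ℕ} {w y : List (Fin q)}

lemma dicke_append_apply (hle : ∀ k, w.count k ≤ lam k) (hwn : w.length ≤ n) :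
    dicke q n lam (w ++ y) =
      ((Real.sqrt ((Nat.multinomial univ (fun m => lam m - w.count m) : ℝ) /
          (Nat.multinomial univ lam : ℝ)) : ℝ) : ℂ) *
        dicke q (n - w.length) (fun m => lam m - w.count m) y := by
  have hsupport : ((w ++ y).length = n ∧ ∀ i, (w ++ y).count i = lam i) ↔
      (y.length = n - w.length ∧ ∀ i, y.count i = lam i - w.count i) := by
    simp only [List.length_append, List.count_append]
    refine and_congr (by omega) (forall_congr' fun i => ?_)
    have := hle i
    omega
  simp only [dicke, hsupport]
  split_ifs
  · have hpos : (0 : ℝ) < Nat.multinomial univ (fun m => lam m - w.count m) := by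
      exact_mod_cast Nat.multinomial_pos _ _
    have hsqrt : (√(Nat.multinomial univ (fun m => lam m - w.count m) : ℝ) : ℂ) ≠ 0 := by
      exact_mod_cast (Real.sqrt_pos.2 hpos).ne'
    rw [Real.sqrt_div hpos.le]
    push_cast
    field_simp
  · rw [mul_zero]

lemma dicke_append_eq_zero {k : Fin q} (hk : lam k < w.count k) :
    dicke q n lam (w ++ y) = 0 := by
  refine if_neg fun ⟨_, hcount⟩ => ?_
  have := hcount k
  rw [List.count_append] at this
  omega

end DickeAppend

theorem Edel_on_dicke_general (q t n : ℕ) (htn : t ≤ n)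
    (lam mu : Fin q → ℕ) (hmu : ∑ i, mu i = t) :
    ((∀ k, mu k ≤ lam k) →
      Edel q mu (dicke q n lam) =
        ((Real.sqrt ((Nat.multinomial Finset.univ (fun m => lam m - mu m) : ℝ) /
            (Nat.multinomial Finset.univ lam : ℝ)) : ℝ) : ℂ) •
          dicke q (n - t) (fun m => lam m - mu m))
    ∧ ((∃ k, lam k < mu k) → Edel q mu (dicke q n lam) = 0) := by
  have hcount := count_deletedWord q mu
  have hlength : (deletedWord q mu).length = t := by rw [length_deletedWord, hmu]
  constructor
  · intro hle
    funext y
    rw [Edel_apply, dicke_append_apply (by simpa [hcount]) (by omega)]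
    simp [hcount, hlength]
  · rintro ⟨k, hk⟩
    funext y
    rw [Edel_apply, dicke_append_eq_zero (k := k) (by rwa [hcount]), Pi.zero_apply]

/-- for `μ ⊢_q t` with `1 ≤ t ≤ n` and `λ - μ ≥ 0` entrywise,
`E^q_μ |D^n_λ⟩ = √((n-t choose λ-μ)/(n choose λ)) |D^{n-t}_{λ-μ}⟩`, and the
result is zero if `λ - μ` has a negative entry. -/
theorem Edel_on_dicke (q t n : ℕ) (ht1 : 1 ≤ t) (htn : t ≤ n)
    (lam mu : Fin q → ℕ) (hlam : ∑ i, lam i = n) (hmu : ∑ i, mu i = t) :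
    ((∀ k, mu k ≤ lam k) →
      Edel q mu (dicke q n lam) =
        ((Real.sqrt ((Nat.multinomial Finset.univ (fun m => lam m - mu m) : ℝ) /
            (Nat.multinomial Finset.univ lam : ℝ)) : ℝ) : ℂ) •
          dicke q (n - t) (fun m => lam m - mu m))
    ∧ ((∃ k, lam k < mu k) → Edel q mu (dicke q n lam) = 0) :=
  Edel_on_dicke_general q t n htn lam mu hmu
end

section
/- Let γ_{i,λ} (for i ∈ [D_L], λ a composition of n into 2 parts) be codeword coefficients of a qudit PI code on qubits satisfying the qudit Knill–Laflamme conditions C1–C3 with parameters (n, D_L, d) and physical dimension 2. Define padded coefficients for physical dimension D_P ≥ 2 by α_{i,λ} = γ_{i,(λ_0,λ_1)} when λ = (λ_0,λ_1,0,...,0) and α_{i,λ} = 0 otherwise. Then the α_{i,λ} satisfy the qudit KL conditions C1–C3 with the same parameters (n, D_L, d) and physical dimension D_P. -/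
/-!
Padding with zeros embeds the compositions `λ ⊢₂ n` into the compositions `λ ⊢_{D_P} n` as those
supported on the first two levels, preserving multinomial coefficients and `λ ↦ λ - μ + ν`.
So for `μ, ν` on the first two levels each KL sum of the padded code is the corresponding sum of
the qubit code, while otherwise it vanishes termwise: if `μ` uses a higher level then `μ ≤ λ`
fails for every `λ` on the first two levels, and if only `ν` does then `λ - μ + ν` uses it too,
where the padded coefficients are zero.
-/

open Finset

/-- The set of compositions of `n` into `D` (nonnegative) parts. -/
def comps (D n : ℕ) : Finset (Fin D → ℕ) :=
  (Fintype.piFinset fun _ : Fin D => Finset.range (n + 1)).filter fun lam => ∑ i, lam i = n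

/-- The coefficient `(n-2t choose λ-μ)/√((n choose λ)(n choose λ-μ+ν))` appearing
in the qudit Knill–Laflamme conditions, with the convention that it is zero if any
multinomial coefficient would contain factorials of negative numbers (i.e. if
`λ - μ` has a negative entry). -/
noncomputable def qklCoeff (D n t : ℕ) (lam mu nu : Fin D → ℕ) : ℝ :=
  if ∀ k, mu k ≤ lam k then
    (Nat.multinomial Finset.univ (fun k => lam k - mu k) : ℝ) /
      Real.sqrt ((Nat.multinomial Finset.univ lam : ℝ) *
        (Nat.multinomial Finset.univ (fun k => lam k - mu k + nu k) : ℝ))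
  else 0

/-- The qudit Knill–Laflamme conditions C1–C3 for a PI code with block length `n`,
logical dimension `DL`, physical dimension `D`, error weight `t`, and codeword
coefficients `α i λ` for `i ∈ [DL]`, `λ ⊢_D n`. -/
def KLqudit (D n DL t : ℕ) (α : Fin DL → (Fin D → ℕ) → ℂ) : Prop :=
  (∀ i j : Fin DL,
    ∑ lam ∈ comps D n, (starRingEnd ℂ) (α i lam) * α j lam = if i = j then 1 else 0)
  ∧ (∀ i j : Fin DL, i ≠ j → ∀ mu ∈ comps D (2 * t), ∀ nu ∈ comps D (2 * t),
      ∑ lam ∈ comps D n,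
        (qklCoeff D n t lam mu nu : ℂ) * (starRingEnd ℂ) (α i lam) *
          α j (fun k => lam k - mu k + nu k) = 0)
  ∧ (∀ i j : Fin DL, ∀ mu ∈ comps D (2 * t), ∀ nu ∈ comps D (2 * t),
      ∑ lam ∈ comps D n,
        (qklCoeff D n t lam mu nu : ℂ) *
          ((starRingEnd ℂ) (α i lam) * α i (fun k => lam k - mu k + nu k) -
            (starRingEnd ℂ) (α j lam) * α j (fun k => lam k - mu k + nu k)) = 0)

lemma mem_comps_iff {D n : ℕ} {lam : Fin D → ℕ} : lam ∈ comps D n ↔ ∑ i, lam i = n := by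
  refine ⟨fun hlam => (mem_filter.mp hlam).2, fun hsum => mem_filter.mpr ⟨?_, hsum⟩⟩
  refine Fintype.mem_piFinset.mpr fun i => mem_range_succ_iff.mpr ?_
  exact hsum ▸ single_le_sum (fun j _ => Nat.zero_le (lam j)) (mem_univ i)

@[to_additive]
lemma prod_eq_prod_castLE {M : Type*} [CommMonoid M] {m D : ℕ} (h : m ≤ D) (f : Fin D → M)
    (hf : ∀ k : Fin D, m ≤ (k : ℕ) → f k = 1) :
    ∏ k, f k = ∏ b : Fin m, f (Fin.castLE h b) := by
  refine Eq.trans ?_ (prod_map univ (Fin.castLEEmb h) f)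
  refine (prod_subset (subset_univ _) fun k _ hk => hf k ?_).symm
  by_contra hlt
  exact hk (mem_map.mpr ⟨⟨k, Nat.lt_of_not_le hlt⟩, mem_univ _, rfl⟩)

/-- Condition C2 reads `klPairing D n t (α i) (α j) μ ν = 0`, and C3
`klPairing D n t (α i) (α i) μ ν = klPairing D n t (α j) (α j) μ ν`. -/
noncomputable def klPairing (D n t : ℕ) (f g : (Fin D → ℕ) → ℂ) (mu nu : Fin D → ℕ) : ℂ :=
  ∑ lam ∈ comps D n,
    (qklCoeff D n t lam mu nu : ℂ) * (starRingEnd ℂ) (f lam) * g (fun k => lam k - mu k + nu k)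

lemma sum_qklCoeff_mul_sub_eq_klPairing_sub {D n t : ℕ} (f g : (Fin D → ℕ) → ℂ)
    (mu nu : Fin D → ℕ) :
    ∑ lam ∈ comps D n, (qklCoeff D n t lam mu nu : ℂ) *
        ((starRingEnd ℂ) (f lam) * f (fun k => lam k - mu k + nu k) -
          (starRingEnd ℂ) (g lam) * g (fun k => lam k - mu k + nu k))
      = klPairing D n t f f mu nu - klPairing D n t g g mu nu := by
  simp only [klPairing, ← sum_sub_distrib, mul_sub, mul_assoc]

section Padding

variable {m D : ℕ}

abbrev IsSupportedBelow (m : ℕ) (lam : Fin D → ℕ) : Prop :=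
  ∀ k : Fin D, m ≤ (k : ℕ) → lam k = 0

lemma IsSupportedBelow.of_le {lam mu : Fin D → ℕ} (hlam : IsSupportedBelow m lam)
    (hle : ∀ k, mu k ≤ lam k) : IsSupportedBelow m mu :=
  fun k hk => Nat.eq_zero_of_le_zero (hlam k hk ▸ hle k)

lemma IsSupportedBelow.of_sub_add {lam mu nu : Fin D → ℕ}
    (h : IsSupportedBelow m fun k => lam k - mu k + nu k) : IsSupportedBelow m nu :=
  fun k hk => (Nat.add_eq_zero_iff.mp (h k hk)).2

def padComp (D : ℕ) (lam : Fin m → ℕ) : Fin D → ℕ :=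
  fun k => if hk : (k : ℕ) < m then lam ⟨k, hk⟩ else 0

@[simp]
lemma padComp_castLE (h : m ≤ D) (lam : Fin m → ℕ) (b : Fin m) :
    padComp D lam (Fin.castLE h b) = lam b := by
  simp [padComp]

lemma isSupportedBelow_padComp (lam : Fin m → ℕ) : IsSupportedBelow m (padComp D lam) :=
  fun _ hk => dif_neg (Nat.not_lt.mpr hk)

lemma padComp_comp_castLE (h : m ≤ D) (lam : Fin m → ℕ) :
    padComp D lam ∘ Fin.castLE h = lam :=
  funext (padComp_castLE h lam)

lemma padComp_injective (h : m ≤ D) : Function.Injective (padComp (m := m) D) := fun a b hab => by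
  rw [← padComp_comp_castLE h a, hab, padComp_comp_castLE]

lemma IsSupportedBelow.padComp_comp_castLE (h : m ≤ D) {lam : Fin D → ℕ}
    (hlam : IsSupportedBelow m lam) : padComp D (lam ∘ Fin.castLE h) = lam := by
  funext k
  by_cases hk : (k : ℕ) < m
  · exact dif_pos hk
  · exact (dif_neg hk).trans (hlam k (Nat.le_of_not_lt hk)).symm

lemma padComp_sub (lam mu : Fin m → ℕ) :
    (fun k => padComp D lam k - padComp D mu k) = padComp D fun b => lam b - mu b := by
  funext k
  unfold padComp
  split_ifs <;> rfl

lemma padComp_sub_add (lam mu nu : Fin m → ℕ) :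
    (fun k => padComp D lam k - padComp D mu k + padComp D nu k)
      = padComp D fun b => lam b - mu b + nu b := by
  funext k
  unfold padComp
  split_ifs <;> rfl

lemma padComp_le_padComp_iff (h : m ≤ D) {lam mu : Fin m → ℕ} :
    (∀ k, padComp D mu k ≤ padComp D lam k) ↔ ∀ b, mu b ≤ lam b := by
  refine ⟨fun hle b => by simpa using hle (Fin.castLE h b), fun hle k => ?_⟩
  unfold padComp
  split_ifs
  exacts [hle _, le_rfl]

lemma sum_padComp (h : m ≤ D) (lam : Fin m → ℕ) : ∑ k, padComp D lam k = ∑ b, lam b := by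
  simp [sum_eq_sum_castLE h _ (isSupportedBelow_padComp lam)]

lemma multinomial_padComp (h : m ≤ D) (lam : Fin m → ℕ) :
    Nat.multinomial univ (padComp D lam) = Nat.multinomial univ lam := by
  have hfact : ∀ k : Fin D, m ≤ (k : ℕ) → (padComp D lam k).factorial = 1 := fun k hk => by
    rw [isSupportedBelow_padComp lam k hk, Nat.factorial_zero]
  simp only [Nat.multinomial, sum_padComp h, prod_eq_prod_castLE h _ hfact, padComp_castLE]

lemma padComp_mem_comps_iff (h : m ≤ D) {n : ℕ} {lam : Fin m → ℕ} :
    padComp D lam ∈ comps D n ↔ lam ∈ comps m n := by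
  rw [mem_comps_iff, mem_comps_iff, sum_padComp h]

lemma IsSupportedBelow.comp_castLE_mem_comps (h : m ≤ D) {n : ℕ} {lam : Fin D → ℕ}
    (hlam : IsSupportedBelow m lam) (hmem : lam ∈ comps D n) : lam ∘ Fin.castLE h ∈ comps m n := by
  rwa [← padComp_mem_comps_iff h, hlam.padComp_comp_castLE h]

lemma sum_comps_eq_sum_padComp (h : m ≤ D) {M : Type*} [AddCommMonoid M] {n : ℕ}
    (F : (Fin D → ℕ) → M) (hF : ∀ lam, ¬ IsSupportedBelow m lam → F lam = 0) :
    ∑ lam ∈ comps D n, F lam = ∑ lam ∈ comps m n, F (padComp D lam) := by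
  rw [← sum_image fun a _ b _ hab => padComp_injective h hab]
  refine (sum_subset (fun lam hlam => ?_) fun lam hlam hnot => hF lam fun hsupp => hnot ?_).symm
  · obtain ⟨lam, hmem, rfl⟩ := mem_image.mp hlam
    exact (padComp_mem_comps_iff h).mpr hmem
  · exact mem_image.mpr ⟨_, hsupp.comp_castLE_mem_comps h hlam, hsupp.padComp_comp_castLE h⟩

lemma qklCoeff_padComp (h : m ≤ D) (n t : ℕ) (lam mu nu : Fin m → ℕ) :
    qklCoeff D n t (padComp D lam) (padComp D mu) (padComp D nu) = qklCoeff m n t lam mu nu := by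
  unfold qklCoeff
  simp only [padComp_le_padComp_iff h, padComp_sub, padComp_sub_add, multinomial_padComp h]

def padCoeff (h : m ≤ D) (f : (Fin m → ℕ) → ℂ) (lam : Fin D → ℕ) : ℂ :=
  if IsSupportedBelow m lam then f (lam ∘ Fin.castLE h) else 0

lemma padCoeff_padComp (h : m ≤ D) (f : (Fin m → ℕ) → ℂ) (lam : Fin m → ℕ) :
    padCoeff h f (padComp D lam) = f lam := by
  rw [padCoeff, if_pos (isSupportedBelow_padComp lam), padComp_comp_castLE]

lemma padCoeff_of_not_isSupportedBelow (h : m ≤ D) (f : (Fin m → ℕ) → ℂ) {lam : Fin D → ℕ}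
    (hlam : ¬ IsSupportedBelow m lam) : padCoeff h f lam = 0 :=
  if_neg hlam

variable (h : m ≤ D) {n t : ℕ} (f g : (Fin m → ℕ) → ℂ)

lemma klPairing_padCoeff_padComp (mu nu : Fin m → ℕ) :
    klPairing D n t (padCoeff h f) (padCoeff h g) (padComp D mu) (padComp D nu)
      = klPairing m n t f g mu nu := by
  unfold klPairing
  rw [sum_comps_eq_sum_padComp h _ fun lam hlam => by
    rw [padCoeff_of_not_isSupportedBelow h f hlam, map_zero, mul_zero, zero_mul]]
  simp only [qklCoeff_padComp h, padComp_sub_add, padCoeff_padComp]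

lemma klPairing_padCoeff_of_not_isSupportedBelow {mu nu : Fin D → ℕ}
    (hsupp : ¬ (IsSupportedBelow m mu ∧ IsSupportedBelow m nu)) :
    klPairing D n t (padCoeff h f) (padCoeff h g) mu nu = 0 := by
  refine sum_eq_zero fun lam _ => ?_
  by_cases hlam : IsSupportedBelow m lam
  · by_cases hle : ∀ k, mu k ≤ lam k
    · -- `μ ≤ λ` puts `μ` on the first `m` levels, so `ν`, hence `λ - μ + ν`, uses a higher one
      have hnu : ¬ IsSupportedBelow m nu := fun hnu => hsupp ⟨hlam.of_le hle, hnu⟩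
      rw [padCoeff_of_not_isSupportedBelow h g fun hsub => hnu hsub.of_sub_add, mul_zero]
    · rw [qklCoeff, if_neg hle, Complex.ofReal_zero, zero_mul, zero_mul]
  · rw [padCoeff_of_not_isSupportedBelow h f hlam, map_zero, mul_zero, zero_mul]

lemma klPairing_padCoeff (mu nu : Fin D → ℕ) :
    klPairing D n t (padCoeff h f) (padCoeff h g) mu nu
      = if IsSupportedBelow m mu ∧ IsSupportedBelow m nu then
          klPairing m n t f g (mu ∘ Fin.castLE h) (nu ∘ Fin.castLE h)
        else 0 := by
  split_ifs with hsupp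
  · rw [← klPairing_padCoeff_padComp h, hsupp.1.padComp_comp_castLE h,
      hsupp.2.padComp_comp_castLE h]
  · exact klPairing_padCoeff_of_not_isSupportedBelow h f g hsupp

theorem KLqudit.pad {DL : ℕ} {γ : Fin DL → (Fin m → ℕ) → ℂ} (hγ : KLqudit m n DL t γ) :
    KLqudit D n DL t fun i => padCoeff h (γ i) := by
  obtain ⟨hC1, hC2, hC3⟩ := hγ
  refine ⟨fun i j => ?_, fun i j hij mu hmu nu hnu => ?_, fun i j mu hmu nu hnu => ?_⟩
  · rw [sum_comps_eq_sum_padComp h _ fun lam hlam => by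
      simp only [padCoeff_of_not_isSupportedBelow h _ hlam, map_zero, zero_mul]]
    simpa only [padCoeff_padComp] using hC1 i j
  · change klPairing D n t _ _ mu nu = 0
    rw [klPairing_padCoeff]
    split_ifs with hsupp
    · exact hC2 i j hij _ (hsupp.1.comp_castLE_mem_comps h hmu) _
        (hsupp.2.comp_castLE_mem_comps h hnu)
    · rfl
  · rw [sum_qklCoeff_mul_sub_eq_klPairing_sub, klPairing_padCoeff, klPairing_padCoeff]
    split_ifs with hsupp
    · rw [← sum_qklCoeff_mul_sub_eq_klPairing_sub]
      exact hC3 i j _ (hsupp.1.comp_castLE_mem_comps h hmu) _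
        (hsupp.2.comp_castLE_mem_comps h hnu)
    · exact sub_self 0

end Padding

theorem padding_preserves_KL_general (n DL t DP : ℕ) (hDP : 2 ≤ DP)
    (γ : Fin DL → (Fin 2 → ℕ) → ℂ) (hγ : KLqudit 2 n DL t γ) :
    KLqudit DP n DL t (fun i lam =>
      if ∀ k : Fin DP, 2 ≤ (k : ℕ) → lam k = 0
      then γ i (fun b : Fin 2 => lam (Fin.castLE hDP b)) else 0) :=
  hγ.pad hDP

/-- a qudit PI code on physical qubits satisfying the qudit KL
conditions with parameters `(n, DL, d)` can be padded (by setting all coefficients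
on compositions with support beyond the first two levels to zero) to a qudit PI
code on physical qudits of any dimension `D_P ≥ 2` satisfying the qudit KL
conditions with the same parameters. -/
theorem padding_preserves_KL (n DL d t DP : ℕ) (hDP : 2 ≤ DP)
    (ht : t = (d - 1) / 2) (hn : 2 * t ≤ n)
    (γ : Fin DL → (Fin 2 → ℕ) → ℂ) (hγ : KLqudit 2 n DL t γ) :
    KLqudit DP n DL t (fun i lam =>
      if ∀ k : Fin DP, 2 ≤ (k : ℕ) → lam k = 0
      then γ i (fun b : Fin 2 => lam (Fin.castLE hDP b)) else 0) :=
  padding_preserves_KL_general n DL t DP hDP γ hγ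
end

section
/- For the simplicial qudit PI code construction with codewords |c_i⟩ = Σ_{j=0}^{D_P−1} ω^{ij} Σ_{l ≡ i+j mod D_P, l ∈ ℛ} f(l) |D^n_{λ^{g l j}}⟩, the codewords have disjoint support: for all i ≠ j in [D_L] and all compositions λ of n, ᾱ_{i,λ} α_{j,λ} = 0, where α_{i,λ} are the coefficients of |c_i⟩ in the Dicke basis. In particular ⟨c_i|c_j⟩ = 0 for i ≠ j. -/
/-- The composition `λ^{g l j}` of `n` into `q+1` parts obtained by inserting
the entry `n − g·Σ_k l_k` at position `j` into the scaled vector `g·l`. -/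
def lamOf (q n g : ℕ) (j : Fin (q + 1)) (l : Fin q → ℕ) : Fin (q + 1) → ℕ :=
  j.insertNth (n - g * ∑ k, l k) (fun k => g * l k)

/-- The coefficient `α_{i,λ}` of the simplicial codeword
`|c_i⟩ = Σ_j ω^{ij} Σ_{l ≡ i+j mod (q+1), l ∈ ℛ} f(l) |D^n_{λ^{g l j}}⟩`
on the Dicke state `|D^n_λ⟩`, where `ω = e^{2πi/(q+1)}` and the physical local
dimension is `D_P = q + 1`. -/
noncomputable def alphaC (q n g DL : ℕ) (R : Finset (Fin q → ℕ)) (f : (Fin q → ℕ) → ℂ)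
    (i : Fin DL) (lam : Fin (q + 1) → ℕ) : ℂ :=
  ∑ j : Fin (q + 1),
    (Complex.exp (2 * (Real.pi : ℂ) * Complex.I / ((q : ℂ) + 1))) ^ ((i : ℕ) * (j : ℕ)) *
      ∑ l ∈ R.filter (fun l => ∀ k, l k % (q + 1) = ((i : ℕ) + (j : ℕ)) % (q + 1)),
        f l * (if lam = lamOf q n g j l then 1 else 0)

/-!
The composition `λ^{g l j}` remembers both the insertion position `j` and the vector `l`: under the
constraint on `ℛ`, the inserted entry `n − g Σ l` exceeds every scaled entry `g l'_k`, so it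
cannot be matched by an entry of another composition `λ^{g l' j'}` with `j' ≠ j`; and for `j' = j`
the remaining entries give `g l = g l'`. Since the residue of `l` modulo `D_P` is `i + j`,
the codeword index `i` is determined by `λ`, so no `λ` lies in the support of two codewords.
-/

open Finset

namespace lamOf

variable {q n g : ℕ}

@[simp]
lemma apply_self (j : Fin (q + 1)) (l : Fin q → ℕ) : lamOf q n g j l j = n - g * ∑ k, l k := by
  simp [lamOf]

@[simp]
lemma apply_succAbove (j : Fin (q + 1)) (l : Fin q → ℕ) (k : Fin q) :
    lamOf q n g j l (j.succAbove k) = g * l k := by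
  simp [lamOf]

lemma position_eq {j j' : Fin (q + 1)} {l l' : Fin q → ℕ}
    (hbound : ∀ k, g * (∑ m, l m + l' k) < n) (h : lamOf q n g j l = lamOf q n g j' l') :
    j = j' := by
  by_contra hne
  obtain ⟨k, rfl⟩ := Fin.exists_succAbove_eq hne
  have hentry := congrFun h (j'.succAbove k)
  simp only [apply_self, apply_succAbove] at hentry
  have := hbound k
  rw [mul_add] at this
  omega

lemma injective (hg : 0 < g) (j : Fin (q + 1)) : Function.Injective (lamOf q n g j) := by
  intro l l' h
  funext k
  have := congrFun h (j.succAbove k)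
  simp only [apply_succAbove] at this
  exact Nat.eq_of_mul_eq_mul_left hg this

end lamOf

lemma exists_of_alphaC_ne_zero {q n g DL : ℕ} {R : Finset (Fin q → ℕ)} {f : (Fin q → ℕ) → ℂ}
    {i : Fin DL} {lam : Fin (q + 1) → ℕ} (h : alphaC q n g DL R f i lam ≠ 0) :
    ∃ j : Fin (q + 1), ∃ l ∈ R,
      (∀ k, l k % (q + 1) = ((i : ℕ) + (j : ℕ)) % (q + 1)) ∧ lam = lamOf q n g j l := by
  obtain ⟨j, -, hj⟩ := exists_ne_zero_of_sum_ne_zero h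
  obtain ⟨l, hl, hl'⟩ := exists_ne_zero_of_sum_ne_zero (right_ne_zero_of_mul hj)
  rw [mem_filter] at hl
  exact ⟨j, l, hl.1, hl.2, of_not_not fun hne => hl' (by rw [if_neg hne, mul_zero])⟩

lemma alphaC_eq_zero_or_eq_zero {q n g DL : ℕ} (hq : 0 < q) (hDL : DL ≤ q + 1) (hg : 0 < g)
    {R : Finset (Fin q → ℕ)} (f : (Fin q → ℕ) → ℂ)
    (hbound : ∀ l ∈ R, ∀ l' ∈ R, ∀ k, g * (∑ m, l m + l' k) < n)
    {i i' : Fin DL} (hii' : i ≠ i') (lam : Fin (q + 1) → ℕ) :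
    alphaC q n g DL R f i lam = 0 ∨ alphaC q n g DL R f i' lam = 0 := by
  by_contra! h
  obtain ⟨j, l, hl, hres, rfl⟩ := exists_of_alphaC_ne_zero h.1
  obtain ⟨j', l', hl', hres', heq⟩ := exists_of_alphaC_ne_zero h.2
  obtain rfl := lamOf.position_eq (hbound l hl l' hl') heq
  obtain rfl := lamOf.injective hg j heq
  let k : Fin q := ⟨0, hq⟩
  have hmod : (i : ℕ) ≡ i' [MOD q + 1] :=
    Nat.ModEq.add_right_cancel' (j : ℕ) ((hres k).symm.trans (hres' k))
  exact hii' (Fin.ext (Nat.ModEq.eq_of_lt_of_lt hmod (i.2.trans_le hDL) (i'.2.trans_le hDL)))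

theorem simplicial_disjoint_support_general (q n g b δ DL : ℕ)
    (hq : 2 ≤ q) (hDL : DL ≤ q + 1)
    (R : Finset (Fin q → ℕ)) (f : (Fin q → ℕ) → ℂ)
    (hn : n = g * b + δ + 1) (hg1 : 1 ≤ g)
    (hR : ∀ l ∈ R, ∀ l' ∈ R, ∀ k : Fin q, (∑ m, l m) + l' k ≤ b) :
    ∀ i j : Fin DL, i ≠ j →
      (∀ lam : Fin (q + 1) → ℕ,
        (starRingEnd ℂ) (alphaC q n g DL R f i lam) * alphaC q n g DL R f j lam = 0)
      ∧ ∑ lam ∈ ((Fintype.piFinset fun _ : Fin (q + 1) => Finset.range (n + 1)).filter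
            fun lam => ∑ m, lam m = n),
          (starRingEnd ℂ) (alphaC q n g DL R f i lam) * alphaC q n g DL R f j lam = 0 := by
  intro i j hij
  have hbound : ∀ l ∈ R, ∀ l' ∈ R, ∀ k, g * (∑ m, l m + l' k) < n := fun l hl l' hl' k =>
    calc g * (∑ m, l m + l' k) ≤ g * b := Nat.mul_le_mul_left g (hR l hl l' hl' k)
      _ < n := by omega
  have hzero : ∀ lam : Fin (q + 1) → ℕ,
      (starRingEnd ℂ) (alphaC q n g DL R f i lam) * alphaC q n g DL R f j lam = 0 := fun lam => by
    rcases alphaC_eq_zero_or_eq_zero (by omega) hDL hg1 f hbound hij lam with h | h <;> simp [h]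
  exact ⟨hzero, sum_eq_zero fun lam _ => hzero lam⟩

/-- the simplicial qudit PI codewords have disjoint support:
for `i ≠ j`, `ᾱ_{i,λ} α_{j,λ} = 0` for every composition `λ`, and in particular
`⟨c_i|c_j⟩ = 0`. -/
theorem simplicial_disjoint_support (q n g b δ t DL : ℕ)
    (hq : 2 ≤ q) (hDL : DL ≤ q + 1)
    (R : Finset (Fin q → ℕ)) (f : (Fin q → ℕ) → ℂ)
    (hn : n = g * b + δ + 1) (hδ : 2 * t ≤ δ) (hg : 2 * t ≤ g) (hg1 : 1 ≤ g)
    (hR : ∀ l ∈ R, ∀ l' ∈ R, ∀ k : Fin q, (∑ m, l m) + l' k ≤ b) :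
    ∀ i j : Fin DL, i ≠ j →
      (∀ lam : Fin (q + 1) → ℕ,
        (starRingEnd ℂ) (alphaC q n g DL R f i lam) * alphaC q n g DL R f j lam = 0)
      ∧ ∑ lam ∈ ((Fintype.piFinset fun _ : Fin (q + 1) => Finset.range (n + 1)).filter
            fun lam => ∑ m, lam m = n),
          (starRingEnd ℂ) (alphaC q n g DL R f i lam) * alphaC q n g DL R f j lam = 0 :=
  simplicial_disjoint_support_general q n g b δ DL hq hDL R f hn hg1 hR
end
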